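/- arXiv:2403.16413 — 2 statements merged into one kernel-verified Lean document; each statement's English description precedes it below -/
import Mathlib

section
/- Let α ∈ (0,1) and h̄ > 0. (a) If α ≤ e^{−h̄/λ}, the test ψ(w) := α·e^{h̄/λ} if (w > h̄ or w ≤ 0) and ψ(w) := 0 otherwise satisfies ∫ψ dμ_0 = α and ∫ψ dμ_{h̄} = α·e^{h̄/λ}. (b) If α > e^{−h̄/λ}, the test ψ(w) := 1 if w > h̄ and ψ(w) := (α − e^{−h̄/λ})/(1 − e^{−h̄/λ}) if w ≤ h̄ satisfies ∫ψ dμ_0 = α and ∫ψ dμ_{h̄} = 1. In both cases the test attains the Neyman–Pearson power Π(h̄) = α·e^{h̄/λ} (case (a)) or Π(h̄) = 1 (case (b)) for testing μ_0 against μ_{h̄} at level α. -/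
/-! Both measures give no mass to `w ≤ 0`, and for `a ≥ h` the tail of `μ_h` is
`μ_h (a, ∞) = e^{-(a-h)/λ}`. Hence, almost surely, each test is a step function jumping
at `h̄`, and its size and power are affine combinations of `e^{-h̄/λ}` and `e^0 = 1`. -/

open MeasureTheory Real

noncomputable section

attribute [local instance] Classical.propDecidable

/-- The exponential distribution with scale `lam` shifted to start at `h`:
the measure on `ℝ` with Lebesgue density `w ↦ lam⁻¹ e^{−(w−h)/lam} 𝟙{w > h}`. -/
def expShift (lam h : ℝ) : Measure ℝ :=
  (volume : Measure ℝ).withDensity fun w =>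
    ENNReal.ofReal (lam⁻¹ * exp (-(w - h) / lam) * if h < w then 1 else 0)

open Set

lemma measure_Iic_expShift (lam h : ℝ) : expShift lam h (Iic h) = 0 := by
  rw [expShift, withDensity_apply _ measurableSet_Iic]
  refine setLIntegral_eq_zero measurableSet_Iic fun w hw => ?_
  simp [not_lt.2 (mem_Iic.1 hw)]

lemma ae_lt_expShift (lam h : ℝ) : ∀ᵐ w ∂expShift lam h, h < w :=
  ae_iff.2 <| measure_mono_null (fun _ hw => not_lt.1 hw) (measure_Iic_expShift lam h)

lemma exp_neg_sub_div (lam h w : ℝ) :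
    exp (-(w - h) / lam) = exp (h / lam) * exp (-lam⁻¹ * w) := by
  rw [← exp_add]; ring_nf

lemma integral_Ioi_expShift_density {lam : ℝ} (hlam : 0 < lam) (h a : ℝ) :
    ∫ w in Ioi a, lam⁻¹ * exp (-(w - h) / lam) = exp (-(a - h) / lam) := by
  simp_rw [exp_neg_sub_div _ h, ← mul_assoc]
  rw [integral_const_mul, integral_exp_mul_Ioi (by simpa using hlam)]
  field_simp

lemma integrableOn_Ioi_expShift_density {lam : ℝ} (hlam : 0 < lam) (h a : ℝ) :
    IntegrableOn (fun w => lam⁻¹ * exp (-(w - h) / lam)) (Ioi a) := by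
  simp_rw [exp_neg_sub_div _ h, ← mul_assoc]
  exact (integrableOn_exp_mul_Ioi (by simpa using hlam) a).const_mul _

lemma measure_Ioi_expShift {lam : ℝ} (hlam : 0 < lam) {h a : ℝ} (ha : h ≤ a) :
    expShift lam h (Ioi a) = ENNReal.ofReal (exp (-(a - h) / lam)) := by
  rw [expShift, withDensity_apply _ measurableSet_Ioi, ← integral_Ioi_expShift_density hlam,
    ofReal_integral_eq_lintegral_ofReal (integrableOn_Ioi_expShift_density hlam h a)
      (ae_of_all _ fun w => by positivity)]
  refine setLIntegral_congr_fun measurableSet_Ioi fun w hw => ?_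
  simp [ha.trans_lt hw]

lemma measureReal_Ioi_expShift {lam : ℝ} (hlam : 0 < lam) {h a : ℝ} (ha : h ≤ a) :
    (expShift lam h).real (Ioi a) = exp (-(a - h) / lam) := by
  rw [measureReal_def, measure_Ioi_expShift hlam ha, ENNReal.toReal_ofReal (exp_nonneg _)]

lemma isProbabilityMeasure_expShift {lam : ℝ} (hlam : 0 < lam) (h : ℝ) :
    IsProbabilityMeasure (expShift lam h) := by
  constructor
  rw [← Iic_union_Ioi (a := h), measure_union (Iic_disjoint_Ioi le_rfl) measurableSet_Ioi,
    measure_Iic_expShift, measure_Ioi_expShift hlam le_rfl]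
  simp

lemma measureReal_Iic_expShift {lam : ℝ} (hlam : 0 < lam) {h a : ℝ} (ha : h ≤ a) :
    (expShift lam h).real (Iic a) = 1 - exp (-(a - h) / lam) := by
  have := isProbabilityMeasure_expShift hlam h
  rw [← compl_Ioi, probReal_compl_eq_one_sub measurableSet_Ioi, measureReal_Ioi_expShift hlam ha]

lemma integral_ite_lt {μ : Measure ℝ} [IsFiniteMeasure μ] (a c d : ℝ) :
    ∫ w, (if a < w then c else d) ∂μ = c * μ.real (Ioi a) + d * μ.real (Iic a) := by
  have hpw : (fun w => if a < w then c else d) = (Ioi a).piecewise (fun _ => c) (fun _ => d) := by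
    ext w; simp [piecewise]
  rw [hpw, integral_piecewise measurableSet_Ioi integrableOn_const integrableOn_const,
    compl_Ioi, setIntegral_const, setIntegral_const, smul_eq_mul, smul_eq_mul, mul_comm c,
    mul_comm d]

theorem np_test_pos_general (lam α hb : ℝ) (hlam : 0 < lam)
    (hhb : 0 < hb) :
    (α ≤ exp (-hb / lam) →
      (∫ w, (if hb < w ∨ w ≤ 0 then α * exp (hb / lam) else 0) ∂ expShift lam 0 = α ∧
       ∫ w, (if hb < w ∨ w ≤ 0 then α * exp (hb / lam) else 0) ∂ expShift lam hb =
         α * exp (hb / lam))) ∧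
    (exp (-hb / lam) < α →
      (∫ w, (if hb < w then (1 : ℝ) else (α - exp (-hb / lam)) / (1 - exp (-hb / lam)))
          ∂ expShift lam 0 = α ∧
       ∫ w, (if hb < w then (1 : ℝ) else (α - exp (-hb / lam)) / (1 - exp (-hb / lam)))
          ∂ expShift lam hb = 1)) := by
  have := isProbabilityMeasure_expShift hlam 0
  have := isProbabilityMeasure_expShift hlam hb
  have htest_ae {h : ℝ} (h0 : 0 ≤ h) :
      (fun w => if hb < w ∨ w ≤ 0 then α * exp (hb / lam) else 0) =ᵐ[expShift lam h]
        fun w => if hb < w then α * exp (hb / lam) else 0 := by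
    filter_upwards [ae_lt_expShift lam h] with w hw
    simp [not_le.2 (h0.trans_lt hw)]
  have hexp : exp (-hb / lam) * exp (hb / lam) = 1 := by rw [← exp_add]; simp [neg_div]
  have hlt : exp (-hb / lam) < 1 :=
    exp_lt_one_iff.2 (div_neg_of_neg_of_pos (neg_lt_zero.2 hhb) hlam)
  simp only [integral_congr_ae (htest_ae le_rfl), integral_congr_ae (htest_ae hhb.le),
    integral_ite_lt, measureReal_Ioi_expShift hlam hhb.le, measureReal_Ioi_expShift hlam le_rfl,
    measureReal_Iic_expShift hlam hhb.le, measureReal_Iic_expShift hlam le_rfl, sub_zero, sub_self,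
    neg_zero, zero_div, exp_zero]
  refine ⟨fun _ => ⟨?_, ?_⟩, fun _ => ⟨?_, ?_⟩⟩
  · linear_combination α * hexp
  · ring
  · rw [div_mul_cancel₀ _ (sub_ne_zero.2 hlt.ne')]; ring
  · ring

/-- The Neyman–Pearson tests of `μ_0` against `μ_{h̄}`, `h̄ > 0`, and their size and power:
(a) when `α ≤ e^{−h̄/λ}`, and (b) when `α > e^{−h̄/λ}`. -/
theorem np_test_pos (lam α hb : ℝ) (hlam : 0 < lam) (hα : α ∈ Set.Ioo (0 : ℝ) 1)
    (hhb : 0 < hb) :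
    (α ≤ exp (-hb / lam) →
      (∫ w, (if hb < w ∨ w ≤ 0 then α * exp (hb / lam) else 0) ∂ expShift lam 0 = α ∧
       ∫ w, (if hb < w ∨ w ≤ 0 then α * exp (hb / lam) else 0) ∂ expShift lam hb =
         α * exp (hb / lam))) ∧
    (exp (-hb / lam) < α →
      (∫ w, (if hb < w then (1 : ℝ) else (α - exp (-hb / lam)) / (1 - exp (-hb / lam)))
          ∂ expShift lam 0 = α ∧
       ∫ w, (if hb < w then (1 : ℝ) else (α - exp (-hb / lam)) / (1 - exp (-hb / lam)))
          ∂ expShift lam hb = 1)) :=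
  np_test_pos_general lam α hb hlam hhb
end
end

section
/- Assume additionally that G_j > 0 for every j, let λ := (Σ_{j=1}^L G_j/λ_j)^{-1}, and let α ∈ (0,1). Every measurable test ψ : ℝ^L → [0,1] with size ∫ψ dν_0 ≤ α satisfies, for every h < 0, ∫ψ dν_h ≤ 1 − (1 − α)·e^{h/λ}. (That is, 1 − (1 − α)·e^{h/λ} is the power envelope at level α for testing ν_0 against the negative local alternatives ν_h, h < 0, in the limit experiment of the covariate model.) -/
/-!
For `h ≤ 0` the `j`-th factor of `ν_h` dominates `e^{G_j h/λ_j}` times the `j`-th factor of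
`ν_0`: on `(0, ∞)`, where `ν_0` lives, the two densities differ exactly by that factor. Hence
`ν_h ≥ e^{h/λ} ν_0` as measures, and integrating the nonnegative function `1 - ψ` gives
`1 - ∫ψ dν_h ≥ e^{h/λ} (1 - ∫ψ dν_0) ≥ e^{h/λ} (1 - α)`.
-/

open MeasureTheory Real
open scoped ENNReal NNReal

noncomputable section

attribute [local instance] Classical.propDecidable

/-- The product measure `ν_h` on `ℝ^L` whose `j`-th factor has Lebesgue density
`w ↦ λ_j⁻¹ e^{−(w − G_j h)/λ_j} 𝟙{w > G_j h}` (exponential with scale `λ_j`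
shifted to start at `G_j h`). -/
def nuMeas {L : ℕ} (lams G : Fin L → ℝ) (h : ℝ) : Measure (Fin L → ℝ) :=
  Measure.pi fun j => (volume : Measure ℝ).withDensity fun w =>
    ENNReal.ofReal ((lams j)⁻¹ * exp (-(w - G j * h) / lams j) * if G j * h < w then 1 else 0)

open ProbabilityTheory

namespace MeasureTheory.Measure

variable {ι : Type*} [Fintype ι] {α : ι → Type*} [∀ i, MeasurableSpace (α i)]

theorem pi_mono {μ ν : ∀ i, Measure (α i)} (h : ∀ i, μ i ≤ ν i) :
    Measure.pi μ ≤ Measure.pi ν := by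
  refine Measure.le_iff.2 fun s hs => ?_
  rw [Measure.pi_def, Measure.pi_def, toMeasure_apply _ _ hs, toMeasure_apply _ _ hs]
  refine OuterMeasure.le_pi.2 (fun t _ => (OuterMeasure.pi_pi_le _ t).trans ?_) s
  exact Finset.prod_le_prod' fun i _ => h i (t i)

theorem pi_nnreal_smul (μ : ∀ i, Measure (α i)) [∀ i, SigmaFinite (μ i)] (c : ι → ℝ≥0) :
    Measure.pi (fun i => c i • μ i) = (∏ i, c i) • Measure.pi μ := by
  refine Measure.pi_eq fun s hs => ?_
  rw [Measure.smul_apply, Measure.pi_pi, ENNReal.smul_def, smul_eq_mul, ENNReal.ofNNReal_finsetProd,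
    ← Finset.prod_mul_distrib]
  simp only [Measure.smul_apply, ENNReal.smul_def, smul_eq_mul]

theorem prod_smul_pi_le_pi {μ ν : ∀ i, Measure (α i)} [∀ i, SigmaFinite (μ i)] {c : ι → ℝ≥0}
    (h : ∀ i, c i • μ i ≤ ν i) : (∏ i, c i) • Measure.pi μ ≤ Measure.pi ν :=
  pi_nnreal_smul μ c ▸ pi_mono h

end MeasureTheory.Measure

theorem integral_le_one_sub_mul_of_smul_le {Ω : Type*} [MeasurableSpace Ω] {μ ν : Measure Ω}
    [IsProbabilityMeasure μ] [IsProbabilityMeasure ν] {c : ℝ≥0} (hμν : c • μ ≤ ν) {ψ : Ω → ℝ}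
    (hψ : Measurable ψ) (hrange : ∀ ω, ψ ω ∈ Set.Icc (0 : ℝ) 1) :
    ∫ ω, ψ ω ∂ν ≤ 1 - c * (1 - ∫ ω, ψ ω ∂μ) := by
  have hint : ∀ ρ : Measure Ω, IsFiniteMeasure ρ → Integrable ψ ρ := fun ρ _ =>
    (integrable_const (1 : ℝ)).mono' hψ.aestronglyMeasurable
      (ae_of_all _ fun ω => by simpa [abs_of_nonneg (hrange ω).1] using (hrange ω).2)
  have key : ∫ ω, (1 - ψ ω) ∂(c • μ) ≤ ∫ ω, (1 - ψ ω) ∂ν :=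
    integral_mono_measure hμν (ae_of_all _ fun ω => sub_nonneg.2 (hrange ω).2)
      ((integrable_const 1).sub (hint ν inferInstance))
  rw [integral_smul_nnreal_measure, integral_sub (integrable_const 1) (hint μ inferInstance),
    integral_sub (integrable_const 1) (hint ν inferInstance)] at key
  simp only [integral_const, probReal_univ, smul_eq_mul, one_mul, NNReal.smul_def] at key
  linarith

def shiftedExpMeasure (lam a : ℝ) : Measure ℝ :=
  volume.withDensity fun w => ENNReal.ofReal (lam⁻¹ * exp (-(w - a) / lam) * if a < w then 1 else 0)

instance (lam a : ℝ) : SigmaFinite (shiftedExpMeasure lam a) :=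
  SigmaFinite.withDensity_ofReal _

theorem isProbabilityMeasure_shiftedExpMeasure {lam : ℝ} (hlam : 0 < lam) (a : ℝ) :
    IsProbabilityMeasure (shiftedExpMeasure lam a) := by
  have hdens : (fun w => ENNReal.ofReal (lam⁻¹ * exp (-(w - a) / lam) * if a < w then 1 else 0))
      =ᵐ[volume] fun w => exponentialPDF lam⁻¹ (w - a) := by
    filter_upwards [(Set.countable_singleton a).ae_notMem volume] with w hw
    rcases (show w ≠ a from hw).lt_or_gt with hwa | haw
    · rw [if_neg (not_lt.2 hwa.le), exponentialPDF_of_neg (by linarith)]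
      simp
    · rw [if_pos haw, exponentialPDF_of_nonneg (by linarith), mul_one,
        neg_div, div_eq_inv_mul]
  constructor
  rw [shiftedExpMeasure, withDensity_apply _ MeasurableSet.univ, Measure.restrict_univ,
    lintegral_congr_ae hdens,
    lintegral_sub_right_eq_self (fun w => exponentialPDF lam⁻¹ w) a,
    lintegral_exponentialPDF_eq_one (inv_pos.2 hlam)]

theorem smul_shiftedExpMeasure_le (lam : ℝ) {a : ℝ} (ha : a ≤ 0) :
    (exp (a / lam)).toNNReal • shiftedExpMeasure lam 0 ≤ shiftedExpMeasure lam a := by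
  rw [shiftedExpMeasure, shiftedExpMeasure, ENNReal.smul_def,
    ← withDensity_smul' _ _ ENNReal.coe_ne_top]
  refine withDensity_mono (ae_of_all _ fun w => ?_)
  dsimp only [Pi.smul_apply, smul_eq_mul]
  rw [← ENNReal.ofReal_coe_nnreal, Real.coe_toNNReal _ (exp_nonneg _)]
  by_cases hw : 0 < w
  · rw [if_pos hw, if_pos (ha.trans_lt hw), mul_one, mul_one, ← ENNReal.ofReal_mul (exp_nonneg _),
      mul_left_comm, ← exp_add]
    apply le_of_eq
    congr 3
    ring
  · simp [hw]

theorem nuMeas_eq_pi {L : ℕ} (lams G : Fin L → ℝ) (h : ℝ) :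
    nuMeas lams G h = Measure.pi fun j => shiftedExpMeasure (lams j) (G j * h) :=
  rfl

theorem isProbabilityMeasure_nuMeas {L : ℕ} {lams : Fin L → ℝ} (hlams : ∀ j, 0 < lams j)
    (G : Fin L → ℝ) (h : ℝ) : IsProbabilityMeasure (nuMeas lams G h) := by
  have := fun j => isProbabilityMeasure_shiftedExpMeasure (hlams j) (G j * h)
  rw [nuMeas_eq_pi]
  infer_instance

theorem smul_nuMeas_zero_le {L : ℕ} (lams : Fin L → ℝ) {G : Fin L → ℝ} (hG : ∀ j, 0 ≤ G j)
    {h : ℝ} (hh : h ≤ 0) :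
    (exp (h * ∑ j, G j / lams j)).toNNReal • nuMeas lams G 0 ≤ nuMeas lams G h := by
  have hprod : (exp (h * ∑ j, G j / lams j)).toNNReal = ∏ j, (exp (G j * h / lams j)).toNNReal := by
    rw [← Real.toNNReal_prod_of_nonneg fun j _ => exp_nonneg _, ← exp_sum, Finset.mul_sum]
    exact congrArg (fun x => (exp x).toNNReal) (Finset.sum_congr rfl fun j _ => by ring)
  rw [hprod, nuMeas_eq_pi, nuMeas_eq_pi]
  simp_rw [mul_zero]
  exact Measure.prod_smul_pi_le_pi fun j =>
    smul_shiftedExpMeasure_le _ (mul_nonpos_of_nonneg_of_nonpos (hG j) hh)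

theorem nu_power_envelope_neg_general (L : ℕ) (lams G : Fin L → ℝ)
    (hlams : ∀ j, 0 < lams j) (hG : ∀ j, 0 < G j) (α : ℝ)
    (ψ : (Fin L → ℝ) → ℝ) (hmeas : Measurable ψ) (hrange : ∀ w, ψ w ∈ Set.Icc (0 : ℝ) 1)
    (hsize : ∫ w, ψ w ∂ nuMeas lams G 0 ≤ α) :
    ∀ h : ℝ, h < 0 →
      ∫ w, ψ w ∂ nuMeas lams G h ≤ 1 - (1 - α) * exp (h / (∑ j, G j / lams j)⁻¹) := by
  intro h hh
  have := isProbabilityMeasure_nuMeas hlams G 0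
  have := isProbabilityMeasure_nuMeas hlams G h
  have hpower := integral_le_one_sub_mul_of_smul_le
    (smul_nuMeas_zero_le lams (fun j => (hG j).le) hh.le) hmeas hrange
  rw [Real.coe_toNNReal _ (exp_nonneg _)] at hpower
  rw [div_inv_eq_mul]
  nlinarith [mul_le_mul_of_nonneg_left (sub_le_sub_left hsize 1)
    (exp_nonneg (h * ∑ j, G j / lams j))]

/-- Power envelope against negative alternatives in the limit experiment of the
covariate model, when every `G_j > 0`, with `λ = (Σ_j G_j/λ_j)⁻¹`. -/
theorem nu_power_envelope_neg (L : ℕ) (hL : 1 ≤ L) (lams G : Fin L → ℝ)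
    (hlams : ∀ j, 0 < lams j) (hG : ∀ j, 0 < G j) (α : ℝ) (hα : α ∈ Set.Ioo (0 : ℝ) 1)
    (ψ : (Fin L → ℝ) → ℝ) (hmeas : Measurable ψ) (hrange : ∀ w, ψ w ∈ Set.Icc (0 : ℝ) 1)
    (hsize : ∫ w, ψ w ∂ nuMeas lams G 0 ≤ α) :
    ∀ h : ℝ, h < 0 →
      ∫ w, ψ w ∂ nuMeas lams G h ≤ 1 - (1 - α) * exp (h / (∑ j, G j / lams j)⁻¹) :=
  nu_power_envelope_neg_general L lams G hlams hG α ψ hmeas hrange hsize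
end
end
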